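/- arXiv:2305.05716 — 5 statements merged into one kernel-verified Lean document; each statement's English description precedes it below -/
import Mathlib

section
/- Let M ≥ 0, N ≥ 1 be integers and define ‖z^n‖² := 1 + ∑_{j=0}^n |c_j|² where c_j are the Taylor coefficients of φ(z) = z^M/(1−z)^N. Then ‖z^n‖ ≍ n^{N−1/2} as n → ∞. -/
/-!
Multiplying the binomial series `1/(1-z)^N = ∑ C(n+N-1, N-1) zⁿ` by `z^M` exhibits a power series
for `z^M/(1-z)^N` on the unit disc, so by uniqueness of power series `c_j = C(j-M+N-1, N-1)`.
For `j ≤ n` this is at most `(N n)^(N-1)`, which bounds `∑_{j ≤ n} c_j²` by a multiple of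
`n^(2N-1)`. Conversely `C(i+N-1, N-1) ≥ (i+1)^(N-1)/(N-1)!`, and the terms with `i` in the upper
half of `[0, n+1-M)` already contribute a multiple of `n^(2N-1)` once `n ≥ 2M`.
-/

open Finset Nat

/-- `shiftedChoose M K j` is the paper's `c_j` for `N = K + 1`. -/
def shiftedChoose (M K j : ℕ) : ℕ := if M ≤ j then (j - M + K).choose K else 0

theorem shiftedChoose_add (M K n : ℕ) : shiftedChoose M K (n + M) = (n + K).choose K := by
  simp [shiftedChoose]

theorem hasSum_shiftedChoose_mul_pow {𝕜 : Type*} [NormedField 𝕜] [CompleteSpace 𝕜]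
    (M K : ℕ) {z : 𝕜} (hz : ‖z‖ < 1) :
    HasSum (fun j => (shiftedChoose M K j : 𝕜) * z ^ j) (z ^ M / (1 - z) ^ (K + 1)) := by
  have hvanish : ∑ j ∈ range M, (shiftedChoose M K j : 𝕜) * z ^ j = 0 :=
    sum_eq_zero fun j hj => by simp [shiftedChoose, not_le.mpr (mem_range.mp hj)]
  have h := (hasSum_choose_mul_geometric_of_norm_lt_one K hz).mul_left (z ^ M)
  rw [mul_one_div] at h
  have hshift : (fun n => (shiftedChoose M K (n + M) : 𝕜) * z ^ (n + M))
      = fun n => z ^ M * ((n + K).choose K * z ^ n) := by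
    funext n
    rw [shiftedChoose_add, pow_add]
    ring
  rwa [← add_zero (z ^ M / _), ← hvanish, ← hasSum_nat_add_iff, hshift]

section RCLike

variable {𝕜 : Type*} [RCLike 𝕜]

theorem one_le_radius_ofScalars_shiftedChoose (M K : ℕ) :
    1 ≤ (FormalMultilinearSeries.ofScalars 𝕜 (fun j => (shiftedChoose M K j : 𝕜))).radius := by
  refine ENNReal.le_of_forall_nnreal_lt fun r hr => ?_
  refine FormalMultilinearSeries.le_radius_of_summable_norm _ ?_
  have hr1 : ‖(r : ℝ)‖ < 1 := by simpa using hr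
  simpa [FormalMultilinearSeries.ofScalars_norm] using
    (hasSum_shiftedChoose_mul_pow (𝕜 := ℝ) M K hr1).summable

theorem hasFPowerSeriesOnBall_pow_div_one_sub_pow (M K : ℕ) :
    HasFPowerSeriesOnBall (fun z : 𝕜 => z ^ M / (1 - z) ^ (K + 1))
      (FormalMultilinearSeries.ofScalars 𝕜 (fun j => (shiftedChoose M K j : 𝕜))) 0 1 where
  r_le := one_le_radius_ofScalars_shiftedChoose M K
  r_pos := one_pos
  hasSum {y} hy := by
    have hy1 : ‖y‖ < 1 := by simpa [← ofReal_norm] using hy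
    simpa [FormalMultilinearSeries.ofScalars_apply_eq, mul_comm] using
      hasSum_shiftedChoose_mul_pow M K hy1

theorem iteratedDeriv_pow_div_one_sub_pow_zero (M K j : ℕ) :
    iteratedDeriv j (fun z : 𝕜 => z ^ M / (1 - z) ^ (K + 1)) 0 / j !
      = shiftedChoose M K j := by
  have hp := (hasFPowerSeriesOnBall_pow_div_one_sub_pow (𝕜 := 𝕜) M K).hasFPowerSeriesAt
  have hcoeff := hp.analyticAt.hasFPowerSeriesAt.eq_formalMultilinearSeries hp
  rw [FormalMultilinearSeries.ofScalars_series_eq_iff] at hcoeff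
  exact congrFun hcoeff j

end RCLike

theorem shiftedChoose_le {M K j n : ℕ} (hj : j ≤ n) (hn : 1 ≤ n) :
    shiftedChoose M K j ≤ ((K + 1) * n) ^ K := by
  unfold shiftedChoose
  split_ifs
  · calc (j - M + K).choose K ≤ (j - M + K) ^ K := Nat.choose_le_pow _ _
      _ ≤ ((K + 1) * n) ^ K := Nat.pow_le_pow_left (by nlinarith [Nat.sub_le j M]) K
  · exact Nat.zero_le _

theorem pow_le_factorial_mul_shiftedChoose_add (M K i : ℕ) :
    (i + 1) ^ K ≤ K ! * shiftedChoose M K (i + M) := by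
  rw [shiftedChoose_add, ← descFactorial_eq_factorial_mul_choose]
  simpa [Nat.add_right_comm i K 1] using pow_sub_le_descFactorial (i + K) K

theorem pow_succ_le_two_pow_mul_sum_range_pow (m p : ℕ) :
    m ^ (p + 1) ≤ 2 ^ (p + 1) * ∑ i ∈ range m, (i + 1) ^ p := by
  have hterm : ∀ i ∈ Ico (m / 2) m, m ^ p ≤ 2 ^ p * (i + 1) ^ p := fun i hi => by
    rw [← mul_pow]
    exact Nat.pow_le_pow_left (by rw [mem_Ico] at hi; omega) p
  calc m ^ (p + 1) ≤ 2 * (m - m / 2) * m ^ p := by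
        rw [pow_succ']
        exact Nat.mul_le_mul_right _ (by omega)
    _ ≤ 2 * ∑ i ∈ Ico (m / 2) m, 2 ^ p * (i + 1) ^ p := by
        rw [mul_assoc, ← Nat.card_Ico, ← smul_eq_mul (#_)]
        exact Nat.mul_le_mul_left 2 (card_nsmul_le_sum _ _ _ hterm)
    _ ≤ 2 ^ (p + 1) * ∑ i ∈ range m, (i + 1) ^ p := by
        rw [← mul_sum, ← mul_assoc, ← pow_succ']
        refine Nat.mul_le_mul_left _ (sum_le_sum_of_subset ?_)
        rw [range_eq_Ico]
        exact Ico_subset_Ico_left (Nat.zero_le _)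

theorem one_add_sum_shiftedChoose_sq_le (M K : ℕ) {n : ℕ} (hn : 1 ≤ n) :
    1 + ∑ j ∈ range (n + 1), shiftedChoose M K j ^ 2
      ≤ (2 * (K + 1) ^ (2 * K) + 1) * n ^ (2 * K + 1) := by
  have hsum : ∑ j ∈ range (n + 1), shiftedChoose M K j ^ 2
      ≤ (n + 1) * ((K + 1) * n) ^ (2 * K) := by
    have := sum_le_card_nsmul (range (n + 1)) (fun j => shiftedChoose M K j ^ 2) _ fun j hj =>
      Nat.pow_le_pow_left (shiftedChoose_le (mem_range_succ_iff.mp hj) hn) 2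
    simpa [← pow_mul'] using this
  calc 1 + ∑ j ∈ range (n + 1), shiftedChoose M K j ^ 2
      ≤ n ^ (2 * K + 1) + 2 * n * ((K + 1) * n) ^ (2 * K) :=
        Nat.add_le_add (Nat.one_le_pow _ _ hn)
          (hsum.trans (Nat.mul_le_mul_right _ (by omega)))
    _ = (2 * (K + 1) ^ (2 * K) + 1) * n ^ (2 * K + 1) := by rw [mul_pow]; ring

theorem pow_le_mul_sum_shiftedChoose_sq (M K : ℕ) {n : ℕ} (hn : 2 * M ≤ n) :
    n ^ (2 * K + 1) ≤ 4 ^ (2 * K + 1) * K ! ^ 2 * ∑ j ∈ range (n + 1), shiftedChoose M K j ^ 2 := by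
  obtain ⟨m, hm⟩ : ∃ m, n + 1 = M + m := ⟨n + 1 - M, by omega⟩
  have hterm : ∀ i ∈ range m, (i + 1) ^ (2 * K) ≤ K ! ^ 2 * shiftedChoose M K (M + i) ^ 2 := by
    intro i _
    rw [pow_mul', ← mul_pow, add_comm M]
    exact Nat.pow_le_pow_left (pow_le_factorial_mul_shiftedChoose_add M K i) 2
  calc n ^ (2 * K + 1) ≤ (2 * m) ^ (2 * K + 1) := Nat.pow_le_pow_left (by omega) _
    _ = 2 ^ (2 * K + 1) * m ^ (2 * K + 1) := mul_pow ..
    _ ≤ 2 ^ (2 * K + 1) * (2 ^ (2 * K + 1) * ∑ i ∈ range m, (i + 1) ^ (2 * K)) :=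
        Nat.mul_le_mul_left _ (pow_succ_le_two_pow_mul_sum_range_pow m (2 * K))
    _ = 4 ^ (2 * K + 1) * ∑ i ∈ range m, (i + 1) ^ (2 * K) := by
        rw [← mul_assoc, ← mul_pow]
        norm_num
    _ ≤ 4 ^ (2 * K + 1) * ∑ i ∈ range m, K ! ^ 2 * shiftedChoose M K (M + i) ^ 2 :=
        Nat.mul_le_mul_left _ (sum_le_sum hterm)
    _ ≤ 4 ^ (2 * K + 1) * K ! ^ 2 * ∑ j ∈ range (n + 1), shiftedChoose M K j ^ 2 := by
        rw [← mul_sum, hm, sum_range_add, mul_assoc]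
        exact Nat.mul_le_mul_left _ (Nat.mul_le_mul_left _ (Nat.le_add_left _ _))

theorem sqrt_mul_natCast_pow (c : ℝ) (n K : ℕ) :
    √(c * n ^ (2 * K + 1)) = √c * (n : ℝ) ^ (((K + 1 : ℕ) : ℝ) - 1 / 2) := by
  rw [Real.sqrt_mul' _ (by positivity)]
  congr 1
  rw [Real.sqrt_eq_rpow, ← Real.rpow_natCast, ← Real.rpow_mul (by positivity)]
  push_cast
  ring_nf

/-- With `c_j` the Taylor coefficients of `φ(z) = z^M/(1-z)^N` and
`‖z^n‖² = 1 + ∑_{j=0}^n |c_j|²`, one has `‖z^n‖ ≍ n^(N - 1/2)` as `n → ∞`. -/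
theorem stmt_7 (M N : ℕ) (hN : 1 ≤ N) (c : ℕ → ℂ)
    (hc : ∀ j, c j = iteratedDeriv j (fun z : ℂ => z ^ M / (1 - z) ^ N) 0 / (j.factorial : ℂ))
    (w : ℕ → ℝ) (hw0 : ∀ n, 0 ≤ w n)
    (hw : ∀ n, w n ^ 2 = 1 + ∑ j ∈ Finset.range (n + 1), ‖c j‖ ^ 2) :
    ∃ c₁ c₂ : ℝ, 0 < c₁ ∧ 0 < c₂ ∧ ∃ J : ℕ, ∀ n, J ≤ n →
      c₁ * (n : ℝ) ^ ((N : ℝ) - 1 / 2) ≤ w n ∧ w n ≤ c₂ * (n : ℝ) ^ ((N : ℝ) - 1 / 2) := by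
  obtain ⟨K, rfl⟩ : ∃ K, N = K + 1 := ⟨N - 1, by omega⟩
  set S : ℕ → ℕ := fun n => ∑ j ∈ range (n + 1), shiftedChoose M K j ^ 2
  have hwS : ∀ n, w n = √(1 + S n) := fun n => by
    rw [← Real.sqrt_sq (hw0 n), hw n]
    simp [S, hc, iteratedDeriv_pow_div_one_sub_pow_zero]
  refine ⟨√(1 / (4 ^ (2 * K + 1) * K ! ^ 2)), √(2 * (K + 1) ^ (2 * K) + 1),
    by positivity, by positivity, 2 * M + 1, fun n hn => ?_⟩
  rw [hwS, ← sqrt_mul_natCast_pow, ← sqrt_mul_natCast_pow]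
  constructor
  · apply Real.sqrt_le_sqrt
    rw [one_div_mul_eq_div, div_le_iff₀' (by positivity)]
    exact_mod_cast (pow_le_mul_sum_shiftedChoose_sq M K (n := n) (by omega)).trans
      (Nat.mul_le_mul_left _ (Nat.le_add_left _ 1))
  · apply Real.sqrt_le_sqrt
    exact_mod_cast one_add_sum_shiftedChoose_sq_le M K (n := n) (by omega)
end

section
/- Let β > 0, γ ∈ (0,1), and for n ≥ 1 let r_n ∈ (0,1) be the unique solution of βγ r_n/(1−r_n)^{γ+1} = n, and set s_n = 1 − r_n. Then s_n = (βγ/n)^{1/(γ+1)} (1 + O(n^{−1/(γ+1)})) as n → ∞. -/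
open Set Real

/-! Writing `p = 1/(γ+1)` and `a_n = (βγ/n)^p`, the defining equation says `s_n^(γ+1) = βγ r_n / n`,
i.e. `s_n = a_n r_n^p`. Since `r_n ≤ r_n^p ≤ 1`, the relative error `1 - r_n^p` is at most
`1 - r_n = s_n ≤ a_n`, so `|s_n - a_n| ≤ a_n² = (βγ)^p a_n n^(-p)`. -/

theorem one_sub_eq_mul_rpow_of_div_rpow_eq {c q n r : ℝ} (hc : 0 ≤ c) (hq : q ≠ 0) (hn : 0 < n)
    (hr0 : 0 ≤ r) (hr1 : r < 1) (h : c * r / (1 - r) ^ q = n) :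
    1 - r = (c / n) ^ q⁻¹ * r ^ q⁻¹ := by
  have hpos : 0 < (1 - r) ^ q := rpow_pos_of_pos (by linarith) q
  rw [← mul_rpow (by positivity) hr0, eq_rpow_inv (by linarith) (by positivity) hq]
  field_simp at h ⊢
  linarith

theorem abs_one_sub_sub_le_sq {a r p : ℝ} (ha : 0 ≤ a) (hr0 : 0 ≤ r) (hr1 : r ≤ 1)
    (hp0 : 0 ≤ p) (hp1 : p ≤ 1) (h : 1 - r = a * r ^ p) :
    |1 - r - a| ≤ a ^ 2 := by
  have hrp_le_one : r ^ p ≤ 1 := rpow_le_one hr0 hr1 hp0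
  have hle_rp : r ≤ r ^ p := self_le_rpow_of_le_one hr0 hr1 hp1
  calc |1 - r - a| = a * (1 - r ^ p) := by
        rw [h, abs_sub_comm, ← mul_one_sub, abs_of_nonneg (by nlinarith)]
    _ ≤ a * (1 - r) := by gcongr
    _ = a * (a * r ^ p) := by rw [h]
    _ ≤ a ^ 2 := by nlinarith

/-- With `r_n` the solution of `βγ r/(1-r)^(γ+1) = n` and `s_n = 1 - r_n`,
one has `s_n = (βγ/n)^(1/(γ+1)) (1 + O(n^(-1/(γ+1))))` as `n → ∞`. -/
theorem stmt_10 (β γ : ℝ) (hβ : 0 < β) (hγ : γ ∈ Ioo (0 : ℝ) 1)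
    (r : ℕ → ℝ) (hr : ∀ n : ℕ, 1 ≤ n → r n ∈ Ioo (0 : ℝ) 1 ∧
      β * γ * r n / (1 - r n) ^ (γ + 1) = n)
    (s : ℕ → ℝ) (hs : ∀ n, s n = 1 - r n) :
    ∃ C : ℝ, 0 < C ∧ ∃ N : ℕ, ∀ n, N ≤ n →
      |s n - (β * γ / n) ^ (1 / (γ + 1))| ≤
        C * (β * γ / n) ^ (1 / (γ + 1)) * (n : ℝ) ^ (-(1 / (γ + 1))) := by
  have hβγ : 0 < β * γ := mul_pos hβ hγ.1
  have hγ1 : 0 < γ + 1 := by linarith [hγ.1]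
  have hp1 : (γ + 1)⁻¹ ≤ 1 := inv_le_one_of_one_le₀ (by linarith [hγ.1])
  simp only [one_div]
  refine ⟨(β * γ) ^ (γ + 1)⁻¹, by positivity, 1, fun n hn => ?_⟩
  obtain ⟨⟨hr0, hr1⟩, heq⟩ := hr n hn
  have hn0 : (0 : ℝ) < n := by exact_mod_cast hn
  have hsol := one_sub_eq_mul_rpow_of_div_rpow_eq hβγ.le hγ1.ne' hn0 hr0.le hr1 heq
  calc |s n - (β * γ / n) ^ (γ + 1)⁻¹| ≤ ((β * γ / n) ^ (γ + 1)⁻¹) ^ 2 := by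
        rw [hs]
        exact abs_one_sub_sub_le_sq (by positivity) hr0.le hr1.le (by positivity) hp1 hsol
    _ = (β * γ) ^ (γ + 1)⁻¹ * (β * γ / n) ^ (γ + 1)⁻¹ * (n : ℝ) ^ (-(γ + 1)⁻¹) := by
        rw [div_rpow hβγ.le hn0.le, rpow_neg hn0.le]
        ring
end

section
/- With β > 0, γ ∈ (0,1), r_n the unique solution in (0,1) of βγr_n/(1−r_n)^{γ+1} = n, and φ(z) = exp(β/(1−z)^γ), we have φ(r_n) ~ exp( β^{1/(γ+1)} γ^{−γ/(γ+1)} n^{γ/(γ+1)} ) as n → ∞, i.e., the ratio of the two sides tends to 1. -/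
/-!
Put `s = 1 - r`. Solving the defining equation of `n` for `n` and substituting turns the
right-hand exponent into `β r^θ / s^γ` with `θ = γ/(γ+1)`, so the two exponents differ by
`β (1 - r^θ) / s^γ ≤ β s^(1-γ)`. Since `s^(γ+1) ≤ βγ/n`, `s → 0`, and `γ < 1` makes the
difference of the exponents tend to `0`.
-/

open Set Filter Topology

namespace Real

theorem rpow_mul_rpow_div_rpow_add_one {β γ r : ℝ} (hβ : 0 < β) (hγ : 0 < γ) (hr0 : 0 < r)
    (hr1 : r < 1) :
    β ^ (1 / (γ + 1)) * γ ^ (-(γ / (γ + 1))) * (β * γ * r / (1 - r) ^ (γ + 1)) ^ (γ / (γ + 1))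
      = β * r ^ (γ / (γ + 1)) / (1 - r) ^ γ := by
  have hs : 0 < 1 - r := by linarith
  have hγ1 : γ + 1 ≠ 0 := by linarith
  have hpow : ((1 - r) ^ (γ + 1)) ^ (γ / (γ + 1)) = (1 - r) ^ γ := by
    rw [← rpow_mul hs.le, mul_div_cancel₀ _ hγ1]
  have hβ' : β ^ (1 / (γ + 1)) * β ^ (γ / (γ + 1)) = β := by
    rw [← rpow_add hβ, ← add_div, add_comm, div_self hγ1, rpow_one]
  rw [div_rpow (by positivity) (by positivity), mul_rpow (by positivity) hr0.le,
    mul_rpow hβ.le hγ.le, hpow, rpow_neg hγ.le]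
  calc _ = β ^ (1 / (γ + 1)) * β ^ (γ / (γ + 1)) * r ^ (γ / (γ + 1)) / (1 - r) ^ γ := by
        field_simp
    _ = _ := by rw [hβ']

theorem abs_div_rpow_sub_mul_rpow_div_rpow_le {β γ θ r : ℝ} (hβ : 0 ≤ β) (hr0 : 0 < r)
    (hr1 : r < 1) (hθ0 : 0 ≤ θ) (hθ1 : θ ≤ 1) :
    |β / (1 - r) ^ γ - β * r ^ θ / (1 - r) ^ γ| ≤ β * (1 - r) ^ (1 - γ) := by
  have hs : 0 < 1 - r := by linarith
  have hrθ : r ≤ r ^ θ := by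
    simpa using rpow_le_rpow_of_exponent_ge hr0 hr1.le hθ1
  have hrθ1 : 0 ≤ 1 - r ^ θ := sub_nonneg.2 (rpow_le_one hr0.le hr1.le hθ0)
  rw [← sub_div, ← mul_one_sub, rpow_sub hs, rpow_one, mul_div_assoc,
    abs_of_nonneg (by positivity)]
  gcongr

end Real

theorem tendsto_zero_of_rpow_le_const_div {s : ℕ → ℝ} {p c : ℝ} (hp : 0 < p)
    (hs : ∀ᶠ n in atTop, 0 ≤ s n ∧ s n ^ p ≤ c / n) : Tendsto s atTop (𝓝 0) := by
  have hsp : Tendsto (fun n => s n ^ p) atTop (𝓝 0) :=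
    squeeze_zero' (hs.mono fun n hn => Real.rpow_nonneg hn.1 p)
      (hs.mono fun n hn => hn.2) (tendsto_const_div_atTop_nhds_zero_nat c)
  have hroot := hsp.rpow_const (p := p⁻¹) (Or.inr (inv_nonneg.2 hp.le))
  rw [Real.zero_rpow (inv_ne_zero hp.ne')] at hroot
  exact hroot.congr' (hs.mono fun n hn => Real.rpow_rpow_inv hn.1 hp.ne')

/-- `φ(r_n) ~ exp(β^(1/(γ+1)) γ^(-γ/(γ+1)) n^(γ/(γ+1)))` as `n → ∞`. -/
theorem stmt_11 (β γ : ℝ) (hβ : 0 < β) (hγ : γ ∈ Ioo (0 : ℝ) 1)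
    (r : ℕ → ℝ) (hr : ∀ n : ℕ, 1 ≤ n → r n ∈ Ioo (0 : ℝ) 1 ∧
      β * γ * r n / (1 - r n) ^ (γ + 1) = n) :
    Tendsto (fun n : ℕ =>
        Real.exp (β / (1 - r n) ^ γ) /
          Real.exp (β ^ (1 / (γ + 1)) * γ ^ (-(γ / (γ + 1))) * (n : ℝ) ^ (γ / (γ + 1))))
      atTop (nhds 1) := by
  obtain ⟨hγ0, hγ1⟩ := hγ
  have hθ1 : γ / (γ + 1) ≤ 1 := (div_le_one (by linarith)).2 (by linarith)
  have hs : Tendsto (fun n => 1 - r n) atTop (𝓝 0) := by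
    refine tendsto_zero_of_rpow_le_const_div (c := β * γ) (by linarith : 0 < γ + 1) ?_
    filter_upwards [eventually_ge_atTop 1] with n hn
    obtain ⟨⟨hr0, hr1⟩, hrn⟩ := hr n hn
    have hpos : 0 < (1 - r n) ^ (γ + 1) := Real.rpow_pos_of_pos (by linarith) _
    refine ⟨by linarith, ?_⟩
    rw [← hrn, le_div_iff₀ (by positivity), mul_div_cancel₀ _ hpos.ne']
    exact mul_le_of_le_one_right (by positivity) hr1.le
  have hbound : Tendsto (fun n => β * (1 - r n) ^ (1 - γ)) atTop (𝓝 0) := by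
    simpa [Real.zero_rpow (by linarith : 1 - γ ≠ 0)] using
      (hs.rpow_const (Or.inr (by linarith : 0 ≤ 1 - γ))).const_mul β
  have hexponent : Tendsto (fun n : ℕ => β / (1 - r n) ^ γ -
      β ^ (1 / (γ + 1)) * γ ^ (-(γ / (γ + 1))) * (n : ℝ) ^ (γ / (γ + 1))) atTop (𝓝 0) := by
    refine squeeze_zero_norm' ?_ hbound
    filter_upwards [eventually_ge_atTop 1] with n hn
    obtain ⟨⟨hr0, hr1⟩, hrn⟩ := hr n hn
    rw [Real.norm_eq_abs, ← hrn, Real.rpow_mul_rpow_div_rpow_add_one hβ hγ0 hr0 hr1]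
    exact Real.abs_div_rpow_sub_mul_rpow_div_rpow_le hβ.le hr0 hr1 (by positivity) hθ1
  simpa [Function.comp_def, ← Real.exp_sub] using (Real.continuous_exp.tendsto 0).comp hexponent
end

section
/- With β > 0, γ ∈ (0,1), and r_n the unique solution in (0,1) of βγ r_n/(1−r_n)^{γ+1} = n, we have r_n^n ~ exp(−(βγ)^{1/(γ+1)} n^{γ/(γ+1)}) as n → ∞. -/
/-!
Put `p = 1/(γ+1)`, `c = (βγ)^p` and `ε = 1 - r_n`. The defining equation says `ε n^p = c r_n^p`,
and `n log r_n + c n^(1-p) = n (log r_n + ε) + (c n^(1-p) - n ε)`. The first term lies between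
`-n ε² / r_n` and `0`, the second between `0` and `c n^(1-p) ε`; by the equation both bounds are
`O(c² n^(1-2p))`, which tends to `0` because `p > 1/2`, i.e. `γ < 1`.
-/

open Set Filter Real

theorem one_sub_mul_rpow_eq_of_div_rpow_eq {k r x e : ℝ} (hk : 0 ≤ k) (hr0 : 0 ≤ r) (hr1 : r ≤ 1)
    (he : e ≠ 0) (hx : 0 < x) (h : k * r / (1 - r) ^ e = x) :
    (1 - r) * x ^ (1 / e) = k ^ (1 / e) * r ^ (1 / e) := by
  have hε : 0 ≤ 1 - r := by linarith
  have hden : (1 - r) ^ e ≠ 0 := by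
    rintro h0
    rw [h0, div_zero] at h
    exact hx.ne h
  have hkr : k * r = x * (1 - r) ^ e := by
    rw [← h, div_mul_cancel₀ _ hden]
  rw [← mul_rpow hk hr0, hkr, mul_rpow hx.le (rpow_nonneg hε _), one_div,
    rpow_rpow_inv hε he, mul_comm]

theorem log_add_one_sub_mem_Icc {r : ℝ} (hr : 0 < r) :
    log r + (1 - r) ∈ Icc (-((1 - r) ^ 2 / r)) 0 := by
  have hlow := one_sub_inv_le_log_of_pos hr
  have hup := log_le_sub_one_of_pos hr
  have hid : 1 - r⁻¹ + (1 - r) = -((1 - r) ^ 2 / r) := by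
    field_simp
    ring
  constructor <;> linarith

theorem abs_mul_log_add_mul_rpow_le {c p x r : ℝ} (hc : 0 ≤ c) (hp : 1 / 2 ≤ p) (hp1 : p ≤ 1)
    (hx : 0 < x) (hr0 : 0 < r) (hr1 : r ≤ 1) (h : (1 - r) * x ^ p = c * r ^ p) :
    |x * log r + c * x ^ (1 - p)| ≤ c ^ 2 * x ^ (1 - 2 * p) := by
  set y := x ^ p
  set z := x ^ (1 - 2 * p)
  set t := r ^ p
  have hz : 0 ≤ z := rpow_nonneg hx.le _
  have hy : 0 ≤ y := rpow_nonneg hx.le _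
  have hx_eq : x = z * y ^ 2 := by
    rw [← rpow_natCast, ← rpow_mul hx.le, ← rpow_add hx, Nat.cast_ofNat,
      show 1 - 2 * p + p * 2 = (1 : ℝ) by ring, rpow_one]
  have hxp_eq : x ^ (1 - p) = z * y := by
    rw [← rpow_add hx]
    ring_nf
  have ht_le : t ≤ 1 := rpow_le_one hr0.le hr1 (by linarith)
  have hr_le : r ≤ t := by
    simpa using rpow_le_rpow_of_exponent_ge hr0 hr1 hp1
  have ht_sq : t ^ 2 ≤ r := by
    rw [← rpow_natCast, ← rpow_mul hr0.le]
    simpa using rpow_le_rpow_of_exponent_ge hr0 hr1 (by push_cast; linarith : 1 ≤ p * (2 : ℕ))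
  have hsplit : x * log r + c * x ^ (1 - p) =
      x * (log r + (1 - r)) + c * z * y * (1 - t) := by
    rw [hxp_eq]
    linear_combination (-(1 - r)) * hx_eq - z * y * h
  have herr_low : -(c ^ 2 * z) ≤ x * (log r + (1 - r)) := by
    have hlow := mul_le_mul_of_nonneg_left (log_add_one_sub_mem_Icc hr0).1 hx.le
    have hsq : x * (1 - r) ^ 2 = c ^ 2 * z * t ^ 2 := by
      rw [hx_eq]
      linear_combination z * ((1 - r) * y + c * t) * h
    have : x * (-((1 - r) ^ 2 / r)) = -(c ^ 2 * z * (t ^ 2 / r)) := by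
      rw [mul_neg, ← mul_div_assoc, hsq]
      ring
    have ht_div : t ^ 2 / r ≤ 1 := (div_le_one hr0).2 ht_sq
    nlinarith [mul_le_mul_of_nonneg_left ht_div (by positivity : 0 ≤ c ^ 2 * z)]
  have herr_up : x * (log r + (1 - r)) ≤ 0 :=
    mul_nonpos_of_nonneg_of_nonpos hx.le (log_add_one_sub_mem_Icc hr0).2
  have hdef_up : c * z * y * (1 - t) ≤ c ^ 2 * z := by
    calc c * z * y * (1 - t) ≤ c * z * ((1 - r) * y) := by
          nlinarith [mul_nonneg (mul_nonneg hc hz) hy]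
      _ = c ^ 2 * z * t := by rw [h]; ring
      _ ≤ c ^ 2 * z := by nlinarith [mul_nonneg (sq_nonneg c) hz]
  have hdef_low : 0 ≤ c * z * y * (1 - t) := by
    have := mul_nonneg (mul_nonneg hc hz) hy
    nlinarith
  rw [hsplit, abs_le]
  constructor <;> linarith

theorem pow_div_exp_neg_eq_exp {r : ℝ} (hr : 0 < r) (n : ℕ) (a : ℝ) :
    r ^ n / exp (-a) = exp (n * log r + a) := by
  rw [exp_add, exp_neg, div_inv_eq_mul, ← log_pow, exp_log (pow_pos hr n)]

/-- `r_n^n ~ exp(-(βγ)^(1/(γ+1)) n^(γ/(γ+1)))` as `n → ∞`. -/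
theorem stmt_12 (β γ : ℝ) (hβ : 0 < β) (hγ : γ ∈ Ioo (0 : ℝ) 1)
    (r : ℕ → ℝ) (hr : ∀ n : ℕ, 1 ≤ n → r n ∈ Ioo (0 : ℝ) 1 ∧
      β * γ * r n / (1 - r n) ^ (γ + 1) = n) :
    Tendsto (fun n : ℕ =>
        r n ^ n / Real.exp (-((β * γ) ^ (1 / (γ + 1)) * (n : ℝ) ^ (γ / (γ + 1)))))
      atTop (nhds 1) := by
  obtain ⟨hγ0, hγ1⟩ := hγ
  set p := 1 / (γ + 1) with hp
  set c := (β * γ) ^ p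
  have hp_half : 1 / 2 < p := one_div_lt_one_div_of_lt (by linarith) (by linarith)
  have hp_le : p ≤ 1 := by rw [hp, div_le_one₀ (by linarith)]; linarith
  have hq : γ / (γ + 1) = 1 - p := by rw [hp]; field_simp; ring
  have hbound : ∀ᶠ n : ℕ in atTop,
      ‖(n : ℝ) * log (r n) + c * (n : ℝ) ^ (1 - p)‖ ≤ c ^ 2 * (n : ℝ) ^ (1 - 2 * p) := by
    filter_upwards [eventually_ge_atTop 1] with n hn
    obtain ⟨⟨hr0, hr1⟩, heq⟩ := hr n hn
    have hn0 : (0 : ℝ) < n := by exact_mod_cast hn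
    exact abs_mul_log_add_mul_rpow_le (by positivity) hp_half.le hp_le hn0 hr0 hr1.le
      (one_sub_mul_rpow_eq_of_div_rpow_eq (by positivity) hr0.le hr1.le (by linarith) hn0 heq)
  have hdecay : Tendsto (fun n : ℕ => c ^ 2 * (n : ℝ) ^ (1 - 2 * p)) atTop (nhds 0) := by
    have := ((tendsto_rpow_neg_atTop (y := 2 * p - 1) (by linarith)).comp
      tendsto_natCast_atTop_atTop).const_mul (c ^ 2)
    simpa using this
  have hexp := (continuous_exp.tendsto 0).comp (squeeze_zero_norm' hbound hdecay)
  rw [exp_zero] at hexp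
  refine hexp.congr' ?_
  filter_upwards [eventually_ge_atTop 1] with n hn
  rw [hq, Function.comp_apply, pow_div_exp_neg_eq_exp (hr n hn).1.1]
end

section
/- Let β > 0 and γ ∈ (0,1), and suppose the Taylor coefficients c_n of φ(z) = exp(β/(1−z)^γ) satisfy c_n ~ φ(r_n)/(r_n^n √(2π B(r_n))) where r_n solves A(r_n) = n with A(r) = βγr/(1−r)^{γ+1} and B(r) = βγr(1+γr)/(1−r)^{γ+2}. Then c_n ~ exp(C n^{γ/(γ+1)}) / (D n^{(γ+2)/(2γ+2)}) as n → ∞, where C = (βγ)^{1/(γ+1)}(1 + 1/γ) and D = √(2π(γ+1)/(βγ)^{1/(γ+1)}). -/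
/-!
Write `δ = 1 - r` at the saddle point `r = r_n`, so that `n δ^(γ+1) = βγ r`. Then
`C n^(γ/(γ+1)) = β(γ+1) r^(γ/(γ+1)) / δ^γ`, and the bounds `δ ≤ -log r ≤ δ / r` squeeze the
exponent `β/δ^γ - n log r` of `φ(r_n)/r_n^n` to within `O(δ^(1-γ))` of `C n^(γ/(γ+1))`; this error
tends to `0` because `γ < 1` and `r_n → 1`. The same relation turns
`D n^((γ+2)/(2γ+2)) / √(2π B(r_n))` into `√((γ+1) r^(1/(γ+1)) / (1+γr))`, which tends to `1`.
-/

open Set Filter Real Topology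

section SaddlePoint

variable {β γ x m : ℝ}

lemma saddle_const_mul_rpow (hβ : 0 < β) (hγ : 0 < γ) (hx : x ∈ Ioo (0 : ℝ) 1)
    (hm : β * γ * x / (1 - x) ^ (γ + 1) = m) :
    (β * γ) ^ (1 / (γ + 1)) * (1 + 1 / γ) * m ^ (γ / (γ + 1)) =
      β * (γ + 1) * x ^ (γ / (γ + 1)) / (1 - x) ^ γ := by
  obtain ⟨hx0, hx1⟩ := hx
  have hβγ : 0 < β * γ := mul_pos hβ hγ
  have hsum : (β * γ) ^ (1 / (γ + 1)) * (β * γ) ^ (γ / (γ + 1)) = β * γ := by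
    rw [← rpow_add hβγ, ← add_div, add_comm, div_self (by positivity), rpow_one]
  subst hm
  rw [div_rpow (by positivity) (by positivity), mul_rpow hβγ.le hx0.le,
    ← rpow_mul (by linarith), mul_div_cancel₀ _ (by positivity : γ + 1 ≠ 0)]
  calc (β * γ) ^ (1 / (γ + 1)) * (1 + 1 / γ) *
        ((β * γ) ^ (γ / (γ + 1)) * x ^ (γ / (γ + 1)) / (1 - x) ^ γ)
      = (β * γ) ^ (1 / (γ + 1)) * (β * γ) ^ (γ / (γ + 1)) * (1 + 1 / γ) *
          x ^ (γ / (γ + 1)) / (1 - x) ^ γ := by ring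
    _ = β * (γ + 1) * x ^ (γ / (γ + 1)) / (1 - x) ^ γ := by
      rw [hsum]; field_simp

lemma saddle_exponent_error_mem_Icc (hβ : 0 < β) (hγ : 0 < γ) (hx : x ∈ Ioo (0 : ℝ) 1)
    (hm : β * γ * x / (1 - x) ^ (γ + 1) = m) :
    β / (1 - x) ^ γ - m * log x - (β * γ) ^ (1 / (γ + 1)) * (1 + 1 / γ) * m ^ (γ / (γ + 1)) ∈
      Icc (-(β * γ) * (1 - x) ^ (1 - γ)) (β * (γ + 1) * (1 - x) ^ (1 - γ)) := by
  obtain ⟨hx0, hx1⟩ := hx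
  have hδ : 0 < 1 - x := by linarith
  have hP : 0 < (1 - x) ^ γ := rpow_pos_of_pos hδ γ
  have hm0 : 0 < m := by rw [← hm]; positivity
  have hmδP : m * (1 - x) * (1 - x) ^ γ = β * γ * x := by
    rw [← hm, rpow_add hδ, rpow_one]; field_simp
  have hlog_lower : 1 - x ≤ -log x := by linarith [log_le_sub_one_of_pos hx0]
  have hlog_upper : -log x ≤ (1 - x) / x := by
    have := one_sub_inv_le_log_of_pos hx0
    rw [sub_div, one_div, div_self hx0.ne']; linarith
  have hL_lower : β * γ * x ≤ m * -log x * (1 - x) ^ γ := by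
    rw [← hmδP]
    gcongr
  have hL_upper : m * -log x * (1 - x) ^ γ ≤ β * γ := by
    calc m * -log x * (1 - x) ^ γ ≤ m * ((1 - x) / x) * (1 - x) ^ γ := by gcongr
      _ = β * γ := by rw [mul_div_assoc', div_mul_eq_mul_div, hmδP]; field_simp
  set q := x ^ (γ / (γ + 1))
  have hq_upper : q ≤ 1 := rpow_le_one hx0.le hx1.le (by positivity)
  have hq_lower : x ≤ q := by
    conv_lhs => rw [← rpow_one x]
    exact rpow_le_rpow_of_exponent_ge hx0 hx1.le (div_le_one_of_le₀ (by linarith) (by positivity))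
  have hE : (β / (1 - x) ^ γ - m * log x
      - (β * γ) ^ (1 / (γ + 1)) * (1 + 1 / γ) * m ^ (γ / (γ + 1))) * (1 - x) ^ γ =
      β + m * -log x * (1 - x) ^ γ - β * (γ + 1) * q := by
    rw [saddle_const_mul_rpow hβ hγ ⟨hx0, hx1⟩ hm]; field_simp; ring
  have hδP : (1 - x) ^ (1 - γ) * (1 - x) ^ γ = 1 - x := by
    rw [← rpow_add hδ, sub_add_cancel, rpow_one]
  have hβγ1 : 0 ≤ β * (γ + 1) := by positivity
  constructor
  · refine le_of_mul_le_mul_right ?_ hP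
    rw [hE, mul_assoc _ ((1 - x) ^ (1 - γ)), hδP]
    nlinarith [mul_le_mul_of_nonneg_left hq_upper hβγ1]
  · refine le_of_mul_le_mul_right ?_ hP
    rw [hE, mul_assoc _ ((1 - x) ^ (1 - γ)), hδP]
    nlinarith [mul_le_mul_of_nonneg_left hq_lower hβγ1]

lemma saddle_sqrt_ratio (hβ : 0 < β) (hγ : 0 < γ) (hx : x ∈ Ioo (0 : ℝ) 1)
    (hm : β * γ * x / (1 - x) ^ (γ + 1) = m) :
    √(2 * π * (γ + 1) / (β * γ) ^ (1 / (γ + 1))) * m ^ ((γ + 2) / (2 * γ + 2)) /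
        √(2 * π * (β * γ * x * (1 + γ * x) / (1 - x) ^ (γ + 2))) =
      √((γ + 1) * x ^ (1 / (γ + 1)) / (1 + γ * x)) := by
  obtain ⟨hx0, hx1⟩ := hx
  have hδ : 0 < 1 - x := by linarith
  have hβγ : 0 < β * γ := mul_pos hβ hγ
  have hm0 : 0 < m := by rw [← hm]; positivity
  have hm_sqrt : m ^ ((γ + 2) / (2 * γ + 2)) = √(m ^ ((γ + 2) / (γ + 1))) := by
    rw [sqrt_eq_rpow, ← rpow_mul hm0.le]
    congr 1; field_simp
  have hm_pow : m ^ ((γ + 2) / (γ + 1)) =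
      β * γ * (β * γ) ^ (1 / (γ + 1)) * (x * x ^ (1 / (γ + 1))) / (1 - x) ^ (γ + 2) := by
    rw [← hm, div_rpow (by positivity) (by positivity), mul_rpow hβγ.le hx0.le,
      ← rpow_mul hδ.le, mul_div_cancel₀ _ (by positivity : γ + 1 ≠ 0),
      show (γ + 2) / (γ + 1) = 1 + 1 / (γ + 1) by field_simp; ring,
      rpow_add hβγ, rpow_add hx0, rpow_one, rpow_one]
  rw [hm_sqrt, ← sqrt_mul (by positivity), ← sqrt_div' _ (by positivity), hm_pow]
  have : (β * γ) ^ (1 / (γ + 1)) ≠ 0 := (rpow_pos_of_pos hβγ _).ne'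
  have : (1 - x) ^ (γ + 2) ≠ 0 := (rpow_pos_of_pos hδ _).ne'
  congr 1
  field_simp

end SaddlePoint

section Limits

variable {α : Type*} {l : Filter α} {β γ : ℝ} {x m : α → ℝ}

lemma tendsto_one_sub_saddle_point (hβ : 0 < β) (hγ : 0 < γ)
    (hxm : ∀ᶠ a in l, x a ∈ Ioo (0 : ℝ) 1 ∧ β * γ * x a / (1 - x a) ^ (γ + 1) = m a)
    (hm : Tendsto m l atTop) :
    Tendsto (fun a => 1 - x a) l (𝓝 0) := by
  have hpow : Tendsto (fun a => (1 - x a) ^ (γ + 1)) l (𝓝 0) := by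
    refine tendsto_of_tendsto_of_tendsto_of_le_of_le' tendsto_const_nhds
      ((tendsto_const_nhds (x := β * γ)).div_atTop hm) ?_ ?_
    · filter_upwards [hxm] with a ⟨⟨_, hx1⟩, _⟩
      exact (rpow_pos_of_pos (by linarith) _).le
    · filter_upwards [hxm] with a ⟨⟨hx0, hx1⟩, hma⟩
      have hma0 : 0 < m a := by rw [← hma]; positivity
      calc (1 - x a) ^ (γ + 1) = β * γ * x a / m a := by rw [← hma]; field_simp
        _ ≤ β * γ / m a :=
          div_le_div_of_nonneg_right (mul_le_of_le_one_right (by positivity) hx1.le) hma0.le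
  have hroot := hpow.rpow_const (p := 1 / (γ + 1)) (Or.inr (by positivity))
  rw [zero_rpow (by positivity)] at hroot
  refine hroot.congr' ?_
  filter_upwards [hxm] with a ⟨⟨_, hx1⟩, _⟩
  rw [← rpow_mul (by linarith), mul_one_div_cancel (by positivity), rpow_one]

lemma tendsto_saddle_exponent_error (hβ : 0 < β) (hγ : γ ∈ Ioo (0 : ℝ) 1)
    (hxm : ∀ᶠ a in l, x a ∈ Ioo (0 : ℝ) 1 ∧ β * γ * x a / (1 - x a) ^ (γ + 1) = m a)
    (hm : Tendsto m l atTop) :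
    Tendsto (fun a => β / (1 - x a) ^ γ - m a * log (x a) -
      (β * γ) ^ (1 / (γ + 1)) * (1 + 1 / γ) * m a ^ (γ / (γ + 1))) l (𝓝 0) := by
  obtain ⟨hγ0, hγ1⟩ := hγ
  have hδ : Tendsto (fun a => (1 - x a) ^ (1 - γ)) l (𝓝 0) := by
    have := (tendsto_one_sub_saddle_point hβ hγ0 hxm hm).rpow_const (p := 1 - γ)
      (Or.inr (by linarith))
    rwa [zero_rpow (by linarith)] at this
  refine tendsto_of_tendsto_of_tendsto_of_le_of_le'
    (by simpa only [mul_zero] using hδ.const_mul (-(β * γ)))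
    (by simpa only [mul_zero] using hδ.const_mul (β * (γ + 1))) ?_ ?_
  · filter_upwards [hxm] with a ⟨hx, hma⟩
    exact (saddle_exponent_error_mem_Icc hβ hγ0 hx hma).1
  · filter_upwards [hxm] with a ⟨hx, hma⟩
    exact (saddle_exponent_error_mem_Icc hβ hγ0 hx hma).2

lemma tendsto_saddle_sqrt_ratio (hβ : 0 < β) (hγ : 0 < γ)
    (hxm : ∀ᶠ a in l, x a ∈ Ioo (0 : ℝ) 1 ∧ β * γ * x a / (1 - x a) ^ (γ + 1) = m a)
    (hm : Tendsto m l atTop) :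
    Tendsto (fun a => √(2 * π * (γ + 1) / (β * γ) ^ (1 / (γ + 1))) *
        m a ^ ((γ + 2) / (2 * γ + 2)) /
        √(2 * π * (β * γ * x a * (1 + γ * x a) / (1 - x a) ^ (γ + 2)))) l (𝓝 1) := by
  have hx : Tendsto x l (𝓝 1) := by
    simpa using (tendsto_one_sub_saddle_point hβ hγ hxm hm).const_sub 1
  have hlim := (((hx.rpow_const (p := 1 / (γ + 1)) (Or.inl one_ne_zero)).const_mul (γ + 1)).div
    ((hx.const_mul γ).const_add 1) (by positivity)).sqrt
  rw [one_rpow, mul_one, mul_one, add_comm 1 γ, div_self (by positivity), sqrt_one] at hlim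
  refine hlim.congr' ?_
  filter_upwards [hxm] with a ⟨hx, hma⟩
  exact (saddle_sqrt_ratio hβ hγ hx hma).symm

end Limits

lemma exp_div_pow_mul_div_exp_div {x : ℝ} (hx : 0 < x) (n : ℕ) (a b s t : ℝ) :
    exp a / (x ^ n * s) / (exp b / t) = exp (a - n * log x - b) * (t / s) := by
  rw [exp_sub, exp_sub, exp_nat_mul, exp_log hx, div_div_eq_mul_div]
  ring

/-- Assuming Hayman's asymptotic formula for the Taylor coefficients of
`φ(z) = exp(β/(1-z)^γ)`, one gets
`c_n ~ exp(C n^(γ/(γ+1))) / (D n^((γ+2)/(2γ+2)))` with the stated constants. -/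
theorem stmt_14 (β γ : ℝ) (hβ : 0 < β) (hγ : γ ∈ Ioo (0 : ℝ) 1)
    (r : ℕ → ℝ) (hr : ∀ n : ℕ, 1 ≤ n → r n ∈ Ioo (0 : ℝ) 1 ∧
      β * γ * r n / (1 - r n) ^ (γ + 1) = n)
    (B : ℝ → ℝ) (hB : ∀ t : ℝ, B t = β * γ * t * (1 + γ * t) / (1 - t) ^ (γ + 2))
    (c : ℕ → ℝ)
    (hc : Tendsto (fun n : ℕ =>
        c n / (Real.exp (β / (1 - r n) ^ γ) / (r n ^ n * Real.sqrt (2 * π * B (r n)))))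
      atTop (nhds 1)) :
    Tendsto (fun n : ℕ =>
        c n / (Real.exp ((β * γ) ^ (1 / (γ + 1)) * (1 + 1 / γ) * (n : ℝ) ^ (γ / (γ + 1))) /
          (Real.sqrt (2 * π * (γ + 1) / (β * γ) ^ (1 / (γ + 1))) *
            (n : ℝ) ^ ((γ + 2) / (2 * γ + 2)))))
      atTop (nhds 1) := by
  simp only [hB] at hc
  have hrn : ∀ᶠ n : ℕ in atTop, r n ∈ Ioo (0 : ℝ) 1 ∧
      β * γ * r n / (1 - r n) ^ (γ + 1) = n := eventually_atTop.2 ⟨1, hr⟩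
  have hexp := (tendsto_saddle_exponent_error hβ hγ hrn tendsto_natCast_atTop_atTop).rexp
  have hsqrt := tendsto_saddle_sqrt_ratio hβ hγ.1 hrn tendsto_natCast_atTop_atTop
  have hlim := hc.mul (hexp.mul hsqrt)
  rw [exp_zero, mul_one, mul_one] at hlim
  refine hlim.congr' ?_
  filter_upwards [hrn] with n ⟨⟨hr0, hr1⟩, _⟩
  have hδ : 0 < 1 - r n := by linarith
  have hγ0 := hγ.1
  have hsaddle_ne : exp (β / (1 - r n) ^ γ) /
      (r n ^ n * √(2 * π * (β * γ * r n * (1 + γ * r n) / (1 - r n) ^ (γ + 2)))) ≠ 0 := by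
    positivity
  rw [← exp_div_pow_mul_div_exp_div hr0, div_mul_div_cancel₀ hsaddle_ne]
end
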